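/- For every nonnegative integer w, there exists a polynomial Q with rational (equivalently real) coefficients of degree exactly 2w (for w ≥ 1; degree 0 for w = 0) such that for every integer n ≥ w, Q(n) equals the unsigned Stirling number of the first kind [n, n−w]. In other words, n ↦ [n, n−w] is a polynomial function of n of degree 2w. -/

import Mathlib

/-- The unsigned Stirling number of the first kind `[n, k]`, defined as the coefficient of
`x^k` in the ascending factorial `x (x+1) ⋯ (x+n-1)`. -/
noncomputable def stirling1 (n k : ℕ) : ℕ := (ascPochhammer ℕ n).coeff k

/-!
The recurrence `[n+1, k+1] = [n, k] + n [n, k+1]` says that `f_w(n) = [n, n-w]` satisfies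
`f_{w+1}(n+1) - f_{w+1}(n) = n f_w(n)` for `n > w`. So, by induction on `w`, it suffices that a
sequence whose forward differences eventually agree with a nonzero polynomial `p` of degree `d`
eventually agrees with a polynomial of degree `d + 1`. Such a discrete antiderivative of `p`
exists because the falling factorials span `K[X]` and `Δ (x)_{k+1} = (k+1) (x)_k`; its degree is
exactly `d + 1` because `Δ q = q(X+1) - q` has degree strictly less than `q`.
-/

open Polynomial

namespace Polynomial

theorem taylor_one_descPochhammer_succ {R : Type*} [CommRing R] (n : ℕ) :
    taylor 1 (descPochhammer R (n + 1)) = (X + 1) * descPochhammer R n := by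
  simp [taylor_apply, descPochhammer_succ_left, mul_comp, comp_assoc]

theorem taylor_one_descPochhammer_succ_sub {R : Type*} [CommRing R] (n : ℕ) :
    taylor 1 (descPochhammer R (n + 1)) - descPochhammer R (n + 1) =
      (n + 1) • descPochhammer R n := by
  rw [taylor_one_descPochhammer_succ, descPochhammer_succ_right, nsmul_eq_mul]
  push_cast
  ring

noncomputable def descPochhammerSequence (R : Type*) [Ring R] [Nontrivial R] [NoZeroDivisors R] :
    Sequence R where
  elems' := descPochhammer R
  degree_eq' n := by
    rw [degree_eq_natDegree (monic_descPochhammer R n).ne_zero, descPochhammer_natDegree]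

theorem degree_taylor_sub_lt {R : Type*} [CommRing R] (r : R) {q : R[X]} (hq : q ≠ 0) :
    (taylor r q - q).degree < q.degree := by
  rw [← degree_taylor q r]
  exact degree_sub_lt_left (degree_taylor q r) (mt (taylor_eq_zero r q).mp hq)
    (leadingCoeff_taylor r q)

variable {K : Type*} [Field K] [CharZero K]

theorem degreeLE_le_map_taylor_one_sub (d : ℕ) :
    degreeLE K d ≤ (degreeLE K (d + 1 : ℕ)).map (taylor 1 - LinearMap.id) := by
  rw [← (descPochhammerSequence K).span_degreeLE fun i _ ↦ by
    simp [descPochhammerSequence, (monic_descPochhammer K i).leadingCoeff]]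
  refine Submodule.span_le.mpr ?_
  rintro _ ⟨i, hi, rfl⟩
  refine ⟨((i + 1 : ℕ) : K)⁻¹ • descPochhammer K (i + 1), ?_, ?_⟩
  · rw [SetLike.mem_coe, mem_degreeLE]
    calc _ ≤ (descPochhammer K (i + 1)).degree := degree_smul_le _ _
      _ = (i + 1 : ℕ) := (descPochhammerSequence K).degree_eq (i + 1)
      _ ≤ (d + 1 : ℕ) := by gcongr; exact hi
  · rw [LinearMap.sub_apply, map_smul, LinearMap.id_apply, ← smul_sub,
      taylor_one_descPochhammer_succ_sub, ← Nat.cast_smul_eq_nsmul K, smul_smul,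
      inv_mul_cancel₀ (Nat.cast_ne_zero.mpr i.succ_ne_zero), one_smul]
    rfl

theorem exists_natDegree_eq_taylor_one_sub_eq {p : K[X]} (hp : p ≠ 0) :
    ∃ q : K[X], q.natDegree = p.natDegree + 1 ∧ taylor 1 q - q = p := by
  obtain ⟨q, hq_le, hq⟩ :=
    degreeLE_le_map_taylor_one_sub p.natDegree (mem_degreeLE.mpr degree_le_natDegree)
  have hq0 : q ≠ 0 := by
    rintro rfl
    exact hp (by simpa using hq.symm)
  refine ⟨q, le_antisymm (natDegree_le_iff_degree_le.mpr (mem_degreeLE.mp hq_le)) ?_, hq⟩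
  exact natDegree_lt_natDegree hp (hq ▸ degree_taylor_sub_lt 1 hq0)

theorem exists_natDegree_eq_eval_eq_of_eq_add_eval {p : K[X]} (hp : p ≠ 0) {f : ℕ → K}
    {m : ℕ} (hf : ∀ n ≥ m, f (n + 1) = f n + p.eval (n : K)) :
    ∃ Q : K[X], Q.natDegree = p.natDegree + 1 ∧ ∀ n ≥ m, Q.eval (n : K) = f n := by
  obtain ⟨q, hq_deg, hq⟩ := exists_natDegree_eq_taylor_one_sub_eq hp
  have hq_succ (x : K) : q.eval (x + 1) = q.eval x + p.eval x := by
    rw [← hq, eval_sub, taylor_eval]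
    ring
  refine ⟨q + C (f m - q.eval (m : K)), by rwa [natDegree_add_C], fun n hn ↦ ?_⟩
  induction n, hn using Nat.le_induction with
  | base => simp
  | succ n hn ih =>
    rw [hf n hn, ← ih]
    simp only [eval_add, eval_C, Nat.cast_add_one, hq_succ]
    ring

end Polynomial

theorem stirling1_self (n : ℕ) : stirling1 n n = 1 := by
  unfold stirling1
  simpa [ascPochhammer_natDegree] using (monic_ascPochhammer ℕ n).coeff_natDegree

theorem stirling1_succ_succ (n k : ℕ) :
    stirling1 (n + 1) (k + 1) = stirling1 n k + n * stirling1 n (k + 1) := by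
  rw [stirling1, ascPochhammer_succ_right, mul_add, coeff_add, coeff_mul_X, ← C_eq_natCast,
    coeff_mul_C, mul_comm]
  rfl

theorem stirling1_succ_sub_succ {n w : ℕ} (h : w < n) :
    stirling1 (n + 1) (n - w) = stirling1 n (n - (w + 1)) + n * stirling1 n (n - w) := by
  obtain ⟨k, hk⟩ : ∃ k, n - w = k + 1 := ⟨n - w - 1, by omega⟩
  rw [hk, stirling1_succ_succ, show n - (w + 1) = k by omega]

/-- For every `w`, the function `n ↦ [n, n-w]` (unsigned Stirling numbers of the first kind)
is, for `n ≥ w`, given by a polynomial of degree exactly `2w` (for `w = 0` this degree is `0`). -/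
theorem stirling1_sub_isPolynomial (w : ℕ) :
    ∃ Q : Polynomial ℚ, Q.degree = (2 * w : ℕ) ∧
      ∀ n : ℕ, w ≤ n → Q.eval (n : ℚ) = (stirling1 n (n - w) : ℚ) := by
  induction w with
  | zero => exact ⟨1, by simp, fun n _ ↦ by simp [stirling1_self]⟩
  | succ w ih =>
    obtain ⟨Q, hQ_deg, hQ⟩ := ih
    have hQ0 : Q ≠ 0 := degree_ne_bot.mp (hQ_deg ▸ WithBot.coe_ne_bot)
    have hf (n : ℕ) (hn : n ≥ w + 1) : (stirling1 (n + 1) (n + 1 - (w + 1)) : ℚ) =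
        stirling1 n (n - (w + 1)) + (X * Q).eval (n : ℚ) := by
      rw [Nat.add_sub_add_right, stirling1_succ_sub_succ hn, eval_mul, eval_X, hQ n (by omega)]
      push_cast
      ring
    obtain ⟨R, hR_deg, hR⟩ :=
      exists_natDegree_eq_eval_eq_of_eq_add_eval (mul_ne_zero X_ne_zero hQ0)
        (f := fun n ↦ (stirling1 n (n - (w + 1)) : ℚ)) hf
    refine ⟨R, ?_, hR⟩
    rw [degree_eq_iff_natDegree_eq_of_pos (by omega), hR_deg, natDegree_X_mul hQ0,
      natDegree_eq_of_degree_eq_some hQ_deg]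
    ring
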